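/- arXiv:2206.15201 — 2 statements merged into one kernel-verified Lean document; each statement's English description precedes it below -/
import Mathlib

section
/- An instance G of the MST problem under explorable uncertainty with predictions and unique T_L = T_U is prediction mandatory free if and only if for every cycle C_i with i ∈ {1,…,l} and every edge e ∈ C_i ∖ {f_i} it holds that ŵ_{f_i} ≥ U_e and ŵ_e ≤ L_{f_i}. Moreover, if G is prediction mandatory free and G' is an instance with unique T_L' = T_U' obtained from G by querying a set of edges, then G' is prediction mandatory free. -/
/-!
Common framework: the minimum spanning tree problem under explorable
uncertainty with (untrusted) predictions.
-/

open scoped BigOperators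
open scoped Classical

noncomputable section

/-- An instance of the MST problem under explorable uncertainty with predictions:
a connected (multi)graph whose edges carry uncertainty intervals (open `(L,U)` for
non-trivial edges, i.e. `L < U`, and the singleton `{L}` for trivial edges, i.e. `L = U`)
together with predicted values `pw e` lying in the intervals. -/
structure UncGraph where
  V : Type
  E : Type
  fintV : Fintype V
  fintE : Fintype E
  decV : DecidableEq V
  decE : DecidableEq E
  ends : E → Sym2 V
  conn : ∀ u v : V, Relation.ReflTransGen (fun a b => ∃ e : E, ends e = s(a, b)) u v
  L : E → ℝ
  U : E → ℝ
  LU : ∀ e, L e ≤ U e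
  pw : E → ℝ
  pw_mem : ∀ e, (L e = U e ∧ pw e = L e) ∨ (L e < pw e ∧ pw e < U e)

attribute [instance] UncGraph.fintV UncGraph.fintE UncGraph.decV UncGraph.decE

namespace UncGraph

variable (G : UncGraph)

/-- The uncertainty interval of an edge: the open interval `(L e, U e)` for a
non-trivial edge, the singleton `{L e}` for a trivial edge (`L e = U e`). -/
def I (e : G.E) : Set ℝ :=
  {x | (G.L e = G.U e ∧ x = G.L e) ∨ (G.L e < x ∧ x < G.U e)}

/-- A trivial edge: its interval is a singleton. -/
def TrivialEdge (e : G.E) : Prop := G.L e = G.U e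

/-- A non-trivial edge: its interval is a nonempty open interval. -/
def NontrivialEdge (e : G.E) : Prop := G.L e < G.U e

/-- `w` is a valid realization of true edge weights. -/
def Valid (w : G.E → ℝ) : Prop := ∀ e, w e ∈ G.I e

/-- Connectivity of two vertices using only edges from `S`. -/
def ConnectsVia (S : Finset G.E) (u v : G.V) : Prop :=
  Relation.ReflTransGen (fun a b => ∃ e ∈ S, G.ends e = s(a, b)) u v

/-- `S` is a spanning tree: it connects all vertices and has `|V| - 1` edges. -/
def IsSpanningTree (S : Finset G.E) : Prop :=
  (∀ u v : G.V, G.ConnectsVia S u v) ∧ S.card + 1 = Fintype.card G.V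

/-- `T` is a minimum spanning tree with respect to the weight function `wf`. -/
def IsMST (wf : G.E → ℝ) (T : Finset G.E) : Prop :=
  G.IsSpanningTree T ∧ ∀ T', G.IsSpanningTree T' → ∑ e ∈ T, wf e ≤ ∑ e ∈ T', wf e

/-- `wf` agrees with the true values `w` on the queried set `Q` and lies in the
uncertainty intervals elsewhere. -/
def Compatible (w : G.E → ℝ) (Q : Finset G.E) (wf : G.E → ℝ) : Prop :=
  (∀ e ∈ Q, wf e = w e) ∧ ∀ e, wf e ∈ G.I e

/-- The query set `Q` verifies `T`: `T` is an MST for every weight function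
compatible with the revealed values. -/
def Verifies (w : G.E → ℝ) (Q T : Finset G.E) : Prop :=
  ∀ wf, G.Compatible w Q wf → G.IsMST wf T

/-- `Q` is a feasible query set for true values `w`. -/
def Feasible (w : G.E → ℝ) (Q : Finset G.E) : Prop :=
  ∃ T, G.Verifies w Q T

/-- The minimum cardinality of a feasible query set. -/
def optCost (w : G.E → ℝ) : ℕ :=
  sInf {n | ∃ Q, G.Feasible w Q ∧ Q.card = n}

/-- `Q` is an optimal (minimum-cardinality feasible) query set. -/
def IsOptimal (w : G.E → ℝ) (Q : Finset G.E) : Prop :=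
  G.Feasible w Q ∧ ∀ Q', G.Feasible w Q' → Q.card ≤ Q'.card

/-- An edge is mandatory if it belongs to every feasible query set. -/
def Mandatory (w : G.E → ℝ) (e : G.E) : Prop :=
  ∀ Q, G.Feasible w Q → e ∈ Q

/-- A witness set intersects every feasible query set. -/
def IsWitnessSet (w : G.E → ℝ) (W : Finset G.E) : Prop :=
  ∀ Q, G.Feasible w Q → ∃ e ∈ W, e ∈ Q

/-- An edge is prediction mandatory if it is mandatory under the assumption that
all queries return the predicted values. -/
def PredMandatory (e : G.E) : Prop := G.Mandatory G.pw e

/-- An instance is prediction mandatory free if it has no prediction mandatory edge. -/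
def PredMandatoryFree : Prop := ∀ e, ¬ G.PredMandatory e

/-- Hop-distance indicator `k_{e'}(e)`: `0` if the prediction `p e` has the same
relation to the interval `I e'` as the true value `w e` (both `≤ L e'`, both
`≥ U e'`, or both strictly inside), and `1` otherwise. -/
def kErr (p w : G.E → ℝ) (e e' : G.E) : ℕ :=
  if (p e ≤ G.L e' ∧ w e ≤ G.L e') ∨ (G.U e' ≤ p e ∧ G.U e' ≤ w e) ∨
      (G.L e' < p e ∧ p e < G.U e' ∧ G.L e' < w e ∧ w e < G.U e')
  then 0 else 1

/-- `h→(e) = Σ_{e' ≠ e} k_{e'}(e)`. -/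
def hright (p w : G.E → ℝ) (e : G.E) : ℕ :=
  ∑ e' ∈ Finset.univ.erase e, G.kErr p w e e'

/-- `h←(e) = Σ_{e' ≠ e} k_e(e')`. -/
def hleft (p w : G.E → ℝ) (e : G.E) : ℕ :=
  ∑ e' ∈ Finset.univ.erase e, G.kErr p w e' e

/-- `h→(E') = Σ_{e ∈ E'} h→(e)`. -/
def hrightSum (p w : G.E → ℝ) (S : Finset G.E) : ℕ := ∑ e ∈ S, G.hright p w e

/-- `h←(E') = Σ_{e ∈ E'} h←(e)`. -/
def hleftSum (p w : G.E → ℝ) (S : Finset G.E) : ℕ := ∑ e ∈ S, G.hleft p w e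

/-- The hop distance of prediction `p` for realization `w`. -/
def hopDist (p w : G.E → ℝ) : ℕ := ∑ e, G.hright p w e

/-- The hop distance `k_h` of the instance's predictions for realization `w`. -/
def khop (w : G.E → ℝ) : ℕ := G.hopDist G.pw w

/-- Lower-limit weights `w^L`: `L e + ε` for non-trivial edges, the known value
for trivial edges. -/
def lowerWeight (ε : ℝ) (e : G.E) : ℝ := if G.L e = G.U e then G.L e else G.L e + ε

/-- Upper-limit weights `w^U`: `U e - ε` for non-trivial edges, the known value
for trivial edges. -/
def upperWeight (ε : ℝ) (e : G.E) : ℝ := if G.L e = G.U e then G.L e else G.U e - ε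

/-- `T` is a lower limit tree: an MST for `w^L` for all sufficiently small `ε > 0`. -/
def IsLowerLimitTree (T : Finset G.E) : Prop :=
  ∃ ε₀ > (0 : ℝ), ∀ ε : ℝ, 0 < ε → ε < ε₀ → G.IsMST (G.lowerWeight ε) T

/-- `T` is an upper limit tree: an MST for `w^U` for all sufficiently small `ε > 0`. -/
def IsUpperLimitTree (T : Finset G.E) : Prop :=
  ∃ ε₀ > (0 : ℝ), ∀ ε : ℝ, 0 < ε → ε < ε₀ → G.IsMST (G.upperWeight ε) T

/-- `T` is simultaneously the unique lower limit tree and the unique upper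
limit tree (`T_L = T_U`, both unique). -/
def UniqueLimitTrees (T : Finset G.E) : Prop :=
  G.IsLowerLimitTree T ∧ G.IsUpperLimitTree T ∧
  (∀ T', G.IsLowerLimitTree T' → T' = T) ∧
  (∀ T', G.IsUpperLimitTree T' → T' = T)

/-- Number of edge-ends of `S` incident to `v` (loops count twice). -/
def incCount (S : Finset G.E) (v : G.V) : ℕ :=
  ∑ e ∈ S, (if G.ends e = s(v, v) then 2 else if v ∈ G.ends e then 1 else 0)

/-- `S` forms a single cycle: nonempty, every vertex has degree `0` or `2`,
and the support is connected. -/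
def IsCycle (S : Finset G.E) : Prop :=
  S.Nonempty ∧ (∀ v, G.incCount S v = 0 ∨ G.incCount S v = 2) ∧
  ∀ u v, G.incCount S u ≠ 0 → G.incCount S v ≠ 0 → G.ConnectsVia S u v

/-- `C` is the cycle closed by adding the edge `f` to the tree `T`. -/
def IsCycleOf (T : Finset G.E) (f : G.E) (C : Finset G.E) : Prop :=
  G.IsCycle C ∧ f ∈ C ∧ C ⊆ insert f T

/-- `e'` lies in the cut `X_e` between the two components of `T \ {e}`. -/
def InCut (T : Finset G.E) (e e' : G.E) : Prop :=
  ∀ u v : G.V, G.ends e' = s(u, v) → ¬ G.ConnectsVia (T.erase e) u v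

/-- `S` is a path between the (distinct) vertices `a` and `b`. -/
def IsPathBetween (S : Finset G.E) (a b : G.V) : Prop :=
  a ≠ b ∧ G.incCount S a = 1 ∧ G.incCount S b = 1 ∧
  (∀ v, v ≠ a → v ≠ b → G.incCount S v = 0 ∨ G.incCount S v = 2) ∧
  ∀ v, G.incCount S v ≠ 0 → G.ConnectsVia S a v

/-- `{f, l}` is an edge of the vertex cover instance `Ḡ` (w.r.t. the tree `T`):
`f ∉ T`, `l ≠ f` lies on the cycle closed by `f`, both are non-trivial, and
their intervals intersect. -/
def VCEdge (T : Finset G.E) (f l : G.E) : Prop :=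
  f ∉ T ∧ l ≠ f ∧ G.NontrivialEdge f ∧ G.NontrivialEdge l ∧
  (∃ C, G.IsCycleOf T f C ∧ l ∈ C) ∧ (G.I f ∩ G.I l).Nonempty

/-- Adjacency in the vertex cover instance `Ḡ` (symmetrized). -/
def VCAdj (T : Finset G.E) (a b : G.E) : Prop := G.VCEdge T a b ∨ G.VCEdge T b a

/-- `S` is a vertex cover of the vertex cover instance `Ḡ`. -/
def IsVCCover (T S : Finset G.E) : Prop :=
  ∀ a b, G.VCAdj T a b → a ∈ S ∨ b ∈ S

/-- `S` is a minimum vertex cover of the vertex cover instance `Ḡ`. -/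
def IsMinVC (T S : Finset G.E) : Prop :=
  G.IsVCCover T S ∧ ∀ S', G.IsVCCover T S' → S.card ≤ S'.card

/-- Edge `e` does not occur in the instance anymore: independently of the
remaining uncertainty it can be deleted (some MST avoids it, for every
realization) or contracted (some MST contains it, for every realization). -/
def Removable (e : G.E) : Prop :=
  (∀ wf : G.E → ℝ, (∀ e', wf e' ∈ G.I e') → ∃ T, G.IsMST wf T ∧ e ∉ T) ∨
  (∀ wf : G.E → ℝ, (∀ e', wf e' ∈ G.I e') → ∃ T, G.IsMST wf T ∧ e ∈ T)

end UncGraph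

/-- The instance obtained from `G` by querying the edges of `Q` under true
values `w`: the intervals of queried edges collapse to the revealed values. -/
def UncGraph.restrict (G : UncGraph) (w : G.E → ℝ) (Q : Finset G.E) : UncGraph where
  V := G.V
  E := G.E
  fintV := G.fintV
  fintE := G.fintE
  decV := G.decV
  decE := G.decE
  ends := G.ends
  conn := G.conn
  L := fun e => if e ∈ Q then w e else G.L e
  U := fun e => if e ∈ Q then w e else G.U e
  LU := fun e => by by_cases h : e ∈ Q <;> simp [h, G.LU e]
  pw := fun e => if e ∈ Q then w e else G.pw e
  pw_mem := fun e => by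
    by_cases h : e ∈ Q
    · simp [h]
    · simpa [h] using G.pw_mem e

/-- A deterministic adaptive query algorithm: given the instance and the set of
already queried edges together with the revealed values, it either picks the next
edge to query or stops (`none`).  The lawfulness condition states that the
decision may only depend on the revealed values of already queried edges. -/
structure Algorithm where
  next : ∀ G : UncGraph, Finset G.E → (G.E → ℝ) → Option G.E
  lawful : ∀ (G : UncGraph) (Q : Finset G.E) (w w' : G.E → ℝ),
    (∀ e ∈ Q, w e = w' e) → next G Q w = next G Q w'

namespace Algorithm

/-- The set of edges queried by `A` after `n` steps, on instance `G` with true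
values `w`; the algorithm stops as soon as the queried set is feasible. -/
def runQueries (A : Algorithm) (G : UncGraph) (w : G.E → ℝ) : ℕ → Finset G.E
  | 0 => ∅
  | n + 1 =>
    let Q := A.runQueries G w n
    if G.Feasible w Q then Q
    else
      match A.next G Q w with
      | some e => insert e Q
      | none => Q

/-- The final query set of the run of `A`. -/
def finalQueries (A : Algorithm) (G : UncGraph) (w : G.E → ℝ) : Finset G.E :=
  A.runQueries G w (Fintype.card G.E + 1)

/-- The number of queries made by `A` on instance `G` with true values `w`. -/
def algCost (A : Algorithm) (G : UncGraph) (w : G.E → ℝ) : ℕ :=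
  (A.finalQueries G w).card

/-- `A` solves every instance: it always ends with a feasible query set. -/
def Solves (A : Algorithm) : Prop :=
  ∀ (G : UncGraph) (w : G.E → ℝ), G.Valid w → G.Feasible w (A.finalQueries G w)

/-- `A` is `α`-consistent: on instances with correct predictions it makes at
most `α · |OPT|` queries. -/
def Consistent (A : Algorithm) (α : ℝ) : Prop :=
  ∀ G : UncGraph, (A.algCost G G.pw : ℝ) ≤ α * (G.optCost G.pw : ℝ)

/-- `A` is `β`-robust: it makes at most `β · |OPT|` queries on every instance. -/
def Robust (A : Algorithm) (β : ℝ) : Prop :=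
  ∀ (G : UncGraph) (w : G.E → ℝ), G.Valid w → (A.algCost G w : ℝ) ≤ β * (G.optCost w : ℝ)

/-- Run of a preprocessing algorithm: it stops exactly when `next` returns
`none` (rather than when the queried set is feasible). -/
def runPre (A : Algorithm) (G : UncGraph) (w : G.E → ℝ) : ℕ → Finset G.E
  | 0 => ∅
  | n + 1 =>
    let Q := A.runPre G w n
    match A.next G Q w with
    | some e => insert e Q
    | none => Q

/-- The final query set of a preprocessing run of `A`. -/
def preQueries (A : Algorithm) (G : UncGraph) (w : G.E → ℝ) : Finset G.E :=
  A.runPre G w (Fintype.card G.E + 1)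

end Algorithm

/-!
Everything is phrased through fundamental cuts: an edge `f ∉ T` closes a cycle through `e ∈ T`
exactly when `f` joins the two components of `T \ {e}`. If the cut conditions hold, `T` stays an
MST whatever value a single unqueried edge takes, so no edge is prediction mandatory. Conversely,
if an edge `m` is not prediction mandatory, one tree `T₀` is an MST both for `m` at `L m` and at
`U m`. Exchanges with the limit tree `T` are governed by lexicographic keys (lower limit, trivial
edges first; upper limit, trivial edges last), and comparing `T₀` with `T` rules out an extremal
violation of the conditions. After queries, the unique limit trees can differ only in queried
edges, because querying raises lower keys and lowers upper keys; the conditions for the new tree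
then follow from those for `T`.
-/

theorem lex_le_of_forall_add_mul_le {p q : ℝ ×ₗ ℕ} {ε₀ : ℝ} (hε₀ : 0 < ε₀)
    (h : ∀ ε, 0 < ε → ε < ε₀ →
      (ofLex p).1 + ε * (ofLex p).2 ≤ (ofLex q).1 + ε * (ofLex q).2) : p ≤ q := by
  rw [Prod.Lex.le_iff']
  constructor
  · set s := {ε : ℝ | (ofLex p).1 + ε * (ofLex p).2 ≤ (ofLex q).1 + ε * (ofLex q).2}
    have hsub : Set.Icc 0 ε₀ ⊆ s := by
      rw [← closure_Ioo hε₀.ne]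
      exact closure_minimal (fun ε hε => h ε hε.1 hε.2)
        (isClosed_le (by fun_prop) (by fun_prop))
    simpa [s] using hsub (Set.left_mem_Icc.2 hε₀.le)
  · intro hpq
    have := h (ε₀ / 2) (by linarith) (by linarith)
    rw [hpq, add_le_add_iff_left] at this
    exact_mod_cast le_of_mul_le_mul_left this (by linarith)

namespace UncGraph

variable {G : UncGraph}

theorem exists_ends_eq (G : UncGraph) (e : G.E) : ∃ a b, G.ends e = s(a, b) :=
  Sym2.exists.1 ⟨_, rfl⟩

/-! ### Connectivity -/

section ConnectsVia

variable {S R : Finset G.E} {a b u v : G.V} {e : G.E}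

def graphOf (G : UncGraph) (S : Finset G.E) : SimpleGraph G.V :=
  SimpleGraph.fromEdgeSet (G.ends '' S)

theorem connectsVia_iff_reachable : G.ConnectsVia S u v ↔ (G.graphOf S).Reachable u v := by
  have hrel : (fun a b => ∃ e ∈ S, G.ends e = s(a, b)) = Sym2.ToRel (G.ends '' S) := by
    ext a b
    simp [Sym2.toRel_prop]
  rw [graphOf, SimpleGraph.reachable_fromEdgeSet_eq_reflTransGen_toRel, ← hrel, ConnectsVia]

theorem ConnectsVia.symm (h : G.ConnectsVia S u v) : G.ConnectsVia S v u :=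
  connectsVia_iff_reachable.2 (connectsVia_iff_reachable.1 h).symm

theorem connectsVia_of_ends (he : e ∈ S) (hends : G.ends e = s(u, v)) : G.ConnectsVia S u v :=
  .single ⟨e, he, hends⟩

theorem ConnectsVia.mono (hSR : S ⊆ R) (h : G.ConnectsVia S u v) : G.ConnectsVia R u v :=
  Relation.ReflTransGen.mono (fun _ _ ⟨e, he, hends⟩ => ⟨e, hSR he, hends⟩) _ _ h

theorem ConnectsVia.of_forall_ends
    (hSR : ∀ e ∈ S, ∀ x y, G.ends e = s(x, y) → G.ConnectsVia R x y)
    (h : G.ConnectsVia S u v) : G.ConnectsVia R u v := by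
  induction h with
  | refl => exact .refl
  | tail _ hstep ih =>
    obtain ⟨e, he, hends⟩ := hstep
    exact ih.trans (hSR e he _ _ hends)

theorem ConnectsVia.of_insert (h : G.ConnectsVia (insert e R) u v) (hends : G.ends e = s(a, b))
    (hab : G.ConnectsVia R a b) : G.ConnectsVia R u v := by
  refine h.of_forall_ends fun g hg x y hxy => ?_
  rcases Finset.mem_insert.1 hg with rfl | hg
  · rcases Sym2.eq_iff.1 (hxy.symm.trans hends) with ⟨rfl, rfl⟩ | ⟨rfl, rfl⟩
    exacts [hab, hab.symm]
  · exact connectsVia_of_ends hg hxy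

theorem ConnectsVia.exists_crossing (h : G.ConnectsVia S u v) (P : G.V → Prop) (hu : P u)
    (hv : ¬ P v) : ∃ e ∈ S, ∃ x y, G.ends e = s(x, y) ∧ P x ∧ ¬ P y := by
  induction h with
  | refl => exact absurd hu hv
  | @tail p q _ hstep ih =>
    by_cases hp : P p
    · obtain ⟨e, he, hends⟩ := hstep
      exact ⟨e, he, p, q, hends, hp, hv⟩
    · exact ih hp

theorem card_le_card_add_one_of_connectsVia (h : ∀ u v, G.ConnectsVia S u v) :
    Fintype.card G.V ≤ S.card + 1 := by
  cases isEmpty_or_nonempty G.V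
  · simp
  have hconn : (G.graphOf S).Connected :=
    ⟨fun u v => connectsVia_iff_reachable.1 (h u v)⟩
  have hedges : Nat.card (G.graphOf S).edgeSet ≤ S.card := by
    rw [Nat.card_coe_set_eq, ← Set.ncard_coe_finset]
    calc _ ≤ (G.ends '' S).ncard :=
          Set.ncard_le_ncard (by simp [graphOf, SimpleGraph.edgeSet_fromEdgeSet]) (Set.toFinite _)
      _ ≤ _ := Set.ncard_image_le (Set.toFinite _)
  rw [← Nat.card_eq_fintype_card]
  exact hconn.card_vert_le_card_edgeSet_add_one.trans (by omega)

end ConnectsVia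

/-! ### Spanning trees and fundamental cuts -/

section SpanningTree

variable {S T : Finset G.E} {e h : G.E} {a b u v : G.V}

theorem inCut_of_ends (hends : G.ends h = s(u, v)) (hsep : ¬ G.ConnectsVia (T.erase e) u v) :
    G.InCut T e h := by
  intro x y hxy
  rcases Sym2.eq_iff.1 (hxy.symm.trans hends) with ⟨rfl, rfl⟩ | ⟨rfl, rfl⟩
  exacts [hsep, fun hc => hsep hc.symm]

theorem InCut.not_mem_erase (hcut : G.InCut T e h) : h ∉ T.erase e := fun hh => by
  obtain ⟨x, y, hxy⟩ := G.exists_ends_eq h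
  exact hcut x y hxy (connectsVia_of_ends hh hxy)

theorem InCut.not_mem (hcut : G.InCut T e h) (hne : h ≠ e) : h ∉ T := fun hh =>
  hcut.not_mem_erase (Finset.mem_erase.2 ⟨hne, hh⟩)

theorem exists_inCut_of_connectsVia (hS : G.ConnectsVia S a b)
    (hsep : ¬ G.ConnectsVia (T.erase e) a b) : ∃ h ∈ S, G.InCut T e h := by
  obtain ⟨h, hS, x, y, hxy, hax, hay⟩ :=
    hS.exists_crossing (G.ConnectsVia (T.erase e) a) .refl hsep
  exact ⟨h, hS, inCut_of_ends hxy fun hc => hay (hax.trans hc)⟩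

theorem IsSpanningTree.inCut_self (hT : G.IsSpanningTree T) (he : e ∈ T) : G.InCut T e e := by
  intro a b hends hab
  have hall : ∀ u v, G.ConnectsVia (T.erase e) u v := fun u v =>
    ((hT.1 u v).mono (Finset.insert_erase he).ge).of_insert hends hab
  have := G.card_le_card_add_one_of_connectsVia hall
  have := Finset.card_erase_add_one he
  have := hT.2
  omega

theorem IsSpanningTree.connectsVia_erase_or (hT : G.IsSpanningTree T) (hends : G.ends e = s(a, b))
    (u : G.V) : G.ConnectsVia (T.erase e) a u ∨ G.ConnectsVia (T.erase e) b u := by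
  induction hT.1 a u with
  | refl => exact .inl .refl
  | @tail p q _ hstep ih =>
    obtain ⟨g, hg, hgpq⟩ := hstep
    by_cases hge : g = e
    · subst hge
      rcases Sym2.eq_iff.1 (hgpq.symm.trans hends) with ⟨-, rfl⟩ | ⟨-, rfl⟩
      exacts [.inr .refl, .inl .refl]
    · have hg' : g ∈ T.erase e := Finset.mem_erase.2 ⟨hge, hg⟩
      exact ih.imp (·.tail ⟨g, hg', hgpq⟩) (·.tail ⟨g, hg', hgpq⟩)

theorem IsSpanningTree.exchange (hT : G.IsSpanningTree T) (he : e ∈ T) (hcut : G.InCut T e h) :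
    G.IsSpanningTree (insert h (T.erase e)) := by
  obtain ⟨a, b, hab⟩ := G.exists_ends_eq e
  obtain ⟨x, y, hxy⟩ := G.exists_ends_eq h
  have hsep := hcut x y hxy
  have hsub : T.erase e ⊆ insert h (T.erase e) := Finset.subset_insert _ _
  have hh : G.ConnectsVia (insert h (T.erase e)) x y :=
    connectsVia_of_ends (Finset.mem_insert_self _ _) hxy
  have hconn : G.ConnectsVia (insert h (T.erase e)) a b := by
    rcases hT.connectsVia_erase_or hab x with hx | hx <;>
      rcases hT.connectsVia_erase_or hab y with hy | hy
    · exact absurd (hx.symm.trans hy) hsep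
    · exact ((hx.mono hsub).trans hh).trans (hy.mono hsub).symm
    · exact ((hy.mono hsub).trans hh.symm).trans (hx.mono hsub).symm
    · exact absurd (hx.symm.trans hy) hsep
  refine ⟨fun u v => ?_, ?_⟩
  · have hT' : T ⊆ insert e (insert h (T.erase e)) := by
      rw [Finset.insert_comm, Finset.insert_erase he]
      exact Finset.subset_insert _ _
    exact ((hT.1 u v).mono hT').of_insert hab hconn
  · rw [Finset.card_insert_of_notMem hcut.not_mem_erase, Finset.card_erase_add_one he, hT.2]

theorem IsSpanningTree.eq_of_subset {T' : Finset G.E} (hT : G.IsSpanningTree T)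
    (hT' : G.IsSpanningTree T') (hsub : T' ⊆ T) : T' = T :=
  Finset.eq_of_subset_of_card_le hsub (by have := hT.2; have := hT'.2; omega)

theorem sum_exchange (wf : G.E → ℝ) (he : e ∈ T) (hh : h ∉ T) :
    ∑ x ∈ insert h (T.erase e), wf x = ∑ x ∈ T, wf x - wf e + wf h := by
  rw [Finset.sum_insert fun hmem => hh (Finset.mem_of_mem_erase hmem), Finset.sum_erase_eq_sub he]
  ring

theorem IsMST.le_of_inCut {wf : G.E → ℝ} (hM : G.IsMST wf T) (he : e ∈ T) (hh : h ∉ T)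
    (hcut : G.InCut T e h) : wf e ≤ wf h := by
  have := hM.2 _ (hM.1.exchange he hcut)
  rw [sum_exchange wf he hh] at this
  linarith

end SpanningTree

/-! ### Paths and cycles -/

section Paths

variable {S P C T : Finset G.E} {e f g h : G.E} {a b u v x y z : G.V}

def incidence (G : UncGraph) (e : G.E) (v : G.V) : ℕ :=
  if G.ends e = s(v, v) then 2 else if v ∈ G.ends e then 1 else 0

theorem incCount_eq_sum (S : Finset G.E) (v : G.V) :
    G.incCount S v = ∑ e ∈ S, G.incidence e v := rfl

theorem incidence_eq (hends : G.ends e = s(x, y)) (v : G.V) :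
    G.incidence e v = (if v = x then 1 else 0) + (if v = y then 1 else 0) := by
  simp only [incidence, hends, Sym2.eq_iff, Sym2.mem_iff]
  by_cases hx : v = x <;> by_cases hy : v = y <;> simp_all [eq_comm]

theorem incidence_eq_zero_iff : G.incidence e v = 0 ↔ v ∉ G.ends e := by
  obtain ⟨x, y, hends⟩ := G.exists_ends_eq e
  rw [incidence_eq hends, hends, Sym2.mem_iff]
  split_ifs <;> simp_all

theorem incCount_eq_zero_iff : G.incCount S v = 0 ↔ ∀ e ∈ S, v ∉ G.ends e := by
  simp only [incCount_eq_sum, Finset.sum_eq_zero_iff, incidence_eq_zero_iff]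

theorem incCount_insert (hf : f ∉ S) (v : G.V) :
    G.incCount (insert f S) v = G.incidence f v + G.incCount S v := by
  simp only [incCount_eq_sum, Finset.sum_insert hf]

theorem sum_incidence (K : Finset G.V) (hends : G.ends e = s(x, y)) :
    ∑ v ∈ K, G.incidence e v = (if x ∈ K then 1 else 0) + (if y ∈ K then 1 else 0) := by
  simp only [incidence_eq hends, Finset.sum_add_distrib, Finset.sum_ite_eq']

theorem even_sum_incCount {K : Finset G.V}
    (hK : ∀ e ∈ S, ∀ x y, G.ends e = s(x, y) → (x ∈ K ↔ y ∈ K)) :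
    Even (∑ v ∈ K, G.incCount S v) := by
  simp only [incCount_eq_sum]
  rw [Finset.sum_comm]
  refine Finset.even_sum _ fun e he => ?_
  obtain ⟨x, y, hends⟩ := G.exists_ends_eq e
  rw [sum_incidence K hends]
  by_cases hx : x ∈ K <;> simp [hx, ← hK e he x y hends]

theorem IsCycle.connectsVia_erase (hC : G.IsCycle C) (he : e ∈ C) (hends : G.ends e = s(a, b)) :
    G.ConnectsVia (C.erase e) a b := by
  by_contra hab
  set K := Finset.univ.filter (G.ConnectsVia (C.erase e) a)
  have hclosed : ∀ g ∈ C.erase e, ∀ x y, G.ends g = s(x, y) → (x ∈ K ↔ y ∈ K) := by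
    intro g hg x y hxy
    simp only [K, Finset.mem_filter, Finset.mem_univ, true_and]
    exact ⟨(·.trans (connectsVia_of_ends hg hxy)),
      (·.trans (connectsVia_of_ends hg hxy).symm)⟩
  have hsplit : ∑ v ∈ K, G.incCount C v
      = ∑ v ∈ K, G.incidence e v + ∑ v ∈ K, G.incCount (C.erase e) v := by
    rw [← Finset.sum_add_distrib]
    refine Finset.sum_congr rfl fun v _ => ?_
    rw [← incCount_insert (Finset.notMem_erase e C), Finset.insert_erase he]
  have hone : ∑ v ∈ K, G.incidence e v = 1 := by
    rw [sum_incidence K hends]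
    simp [K, hab, show G.ConnectsVia (C.erase e) a a from .refl]
  have heven : Even (∑ v ∈ K, G.incCount C v) :=
    Finset.even_sum _ fun v _ => by rcases hC.2.1 v with h | h <;> simp [h]
  rw [hsplit, hone, add_comm, Nat.even_add_one] at heven
  exact heven (even_sum_incCount hclosed)

theorem IsCycleOf.mem_of_ne (hC : G.IsCycleOf T f C) (he : e ∈ C) (hef : e ≠ f) : e ∈ T :=
  (Finset.mem_insert.1 (hC.2.2 he)).resolve_left hef

theorem IsCycleOf.inCut (hC : G.IsCycleOf T f C) (hT : G.IsSpanningTree T) (he : e ∈ C)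
    (hef : e ≠ f) : G.InCut T e f := by
  intro u v hends huv
  obtain ⟨a, b, hab⟩ := G.exists_ends_eq e
  have hsub : C.erase e ⊆ insert f (T.erase e) := by
    intro g hg
    obtain ⟨hge, hgC⟩ := Finset.mem_erase.1 hg
    rcases Finset.mem_insert.1 (hC.2.2 hgC) with rfl | hgT
    · exact Finset.mem_insert_self _ _
    · exact Finset.mem_insert_of_mem (Finset.mem_erase.2 ⟨hge, hgT⟩)
  exact hT.inCut_self (hC.mem_of_ne he hef) a b hab
    (((hC.1.connectsVia_erase he hab).mono hsub).of_insert hends huv)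

/-- `P` is the edge set of a path from `a` to `b` (empty when `a = b`): adding a virtual edge
`ab` makes all degrees `0` or `2`, and deleting an edge of `P` leaves `a` and `b` attached to
opposite ends of it. -/
structure IsEdgePath (P : Finset G.E) (a b : G.V) : Prop where
  connectsVia : G.ConnectsVia P a b
  degree : ∀ v, G.incCount P v + (if v = a then 1 else 0) + (if v = b then 1 else 0) = 0 ∨
    G.incCount P v + (if v = a then 1 else 0) + (if v = b then 1 else 0) = 2
  split : ∀ h ∈ P, ∀ x y, G.ends h = s(x, y) →
    G.ConnectsVia (P.erase h) a x ∧ G.ConnectsVia (P.erase h) y b ∨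
    G.ConnectsVia (P.erase h) a y ∧ G.ConnectsVia (P.erase h) x b

theorem isEdgePath_empty (a : G.V) : G.IsEdgePath ∅ a a where
  connectsVia := .refl
  degree v := by by_cases hv : v = a <;> simp [hv, incCount]
  split := by simp

theorem IsEdgePath.cons (hP : G.IsEdgePath P b v) (hends : G.ends e = s(a, b)) (hab : a ≠ b)
    (hav : a ≠ v) (ha : ∀ h ∈ P, a ∉ G.ends h) : G.IsEdgePath (insert e P) a v := by
  have heP : e ∉ P := fun he => ha e he (by simp [hends])
  have hstep : ∀ R : Finset G.E, G.ConnectsVia (insert e R) a b := fun R =>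
    connectsVia_of_ends (Finset.mem_insert_self _ _) hends
  refine ⟨(hstep P).trans (hP.connectsVia.mono (Finset.subset_insert _ _)), fun z => ?_, ?_⟩
  · rw [incCount_insert heP, incidence_eq hends]
    by_cases hza : z = a
    · subst hza
      simp [hab, hav, incCount_eq_zero_iff.2 ha]
    · simp only [if_neg hza]
      rcases hP.degree z with hz | hz <;> [left; right] <;> omega
  · intro h hh x y hxy
    rcases Finset.mem_insert.1 hh with rfl | hh
    · rw [Finset.erase_insert heP]
      rcases Sym2.eq_iff.1 (hxy.symm.trans hends) with ⟨rfl, rfl⟩ | ⟨rfl, rfl⟩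
      exacts [.inl ⟨.refl, hP.connectsVia⟩, .inr ⟨.refl, hP.connectsVia⟩]
    · have hsub : P.erase h ⊆ insert e (P.erase h) := Finset.subset_insert _ _
      rw [Finset.erase_insert_of_ne (fun (heh : e = h) => heP (heh ▸ hh))]
      exact (hP.split h hh x y hxy).imp
        (fun ⟨h1, h2⟩ => ⟨(hstep _).trans (h1.mono hsub), h2.mono hsub⟩)
        (fun ⟨h1, h2⟩ => ⟨(hstep _).trans (h1.mono hsub), h2.mono hsub⟩)

theorem exists_isEdgePath_of_walk :
    ∀ {u v : G.V} (w : (G.graphOf S).Walk u v), w.IsPath →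
      ∃ P ⊆ S, G.IsEdgePath P u v ∧ ∀ h ∈ P, ∀ x ∈ G.ends h, x ∈ w.support
  | _, _, .nil, _ => ⟨∅, Finset.empty_subset _, isEdgePath_empty _, by simp⟩
  | _, _, .cons hadj w, hw => by
    rw [SimpleGraph.Walk.cons_isPath_iff] at hw
    obtain ⟨P, hPS, hP, hsupp⟩ := exists_isEdgePath_of_walk w hw.1
    rw [graphOf, SimpleGraph.fromEdgeSet_adj] at hadj
    obtain ⟨⟨e, heS, hends⟩, hne⟩ := hadj
    refine ⟨insert e P, Finset.insert_subset heS hPS,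
      hP.cons hends hne (fun h => hw.2 (h ▸ w.end_mem_support))
        (fun h hh ha => hw.2 (hsupp h hh _ ha)), fun h hh x hx => ?_⟩
    rw [SimpleGraph.Walk.support_cons, List.mem_cons]
    rcases Finset.mem_insert.1 hh with rfl | hh
    · rw [hends, Sym2.mem_iff] at hx
      exact hx.imp id fun (hxp : x = _) => hxp ▸ w.start_mem_support
    · exact .inr (hsupp h hh x hx)

theorem exists_isEdgePath (h : G.ConnectsVia S u v) : ∃ P ⊆ S, G.IsEdgePath P u v := by
  obtain ⟨w, hw⟩ := (connectsVia_iff_reachable.1 h).exists_isPath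
  obtain ⟨P, hPS, hP, -⟩ := exists_isEdgePath_of_walk w hw
  exact ⟨P, hPS, hP⟩

theorem IsEdgePath.connectsVia_of_mem_ends (hP : G.IsEdgePath P a b) (hh : h ∈ P)
    (hz : z ∈ G.ends h) : G.ConnectsVia P a z := by
  obtain ⟨x, y, hxy⟩ := G.exists_ends_eq h
  have hsub := Finset.erase_subset h P
  have hxy' : G.ConnectsVia P x y := connectsVia_of_ends hh hxy
  rw [hxy, Sym2.mem_iff] at hz
  rcases hP.split h hh x y hxy with ⟨hax, -⟩ | ⟨hay, -⟩ <;> rcases hz with rfl | rfl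
  exacts [hax.mono hsub, (hax.mono hsub).trans hxy', (hay.mono hsub).trans hxy'.symm,
    hay.mono hsub]

theorem IsEdgePath.isCycleOf (hP : G.IsEdgePath P a b) (hPT : P ⊆ T) (hf : f ∉ T)
    (hends : G.ends f = s(a, b)) : G.IsCycleOf T f (insert f P) := by
  have hfP : f ∉ P := fun h => hf (hPT h)
  have hreach : ∀ z, G.incCount (insert f P) z ≠ 0 → G.ConnectsVia (insert f P) a z := by
    intro z hz
    obtain ⟨g, hg, hzg⟩ := not_forall₂.1 (mt incCount_eq_zero_iff.2 hz)
    rw [not_not] at hzg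
    rcases Finset.mem_insert.1 hg with rfl | hg
    · rw [hends, Sym2.mem_iff] at hzg
      rcases hzg with rfl | rfl
      exacts [.refl, connectsVia_of_ends (Finset.mem_insert_self _ _) hends]
    · exact (hP.connectsVia_of_mem_ends hg hzg).mono (Finset.subset_insert _ _)
  refine ⟨⟨⟨f, Finset.mem_insert_self _ _⟩, fun z => ?_, fun x y hx hy =>
    (hreach x hx).symm.trans (hreach y hy)⟩, Finset.mem_insert_self _ _,
    Finset.insert_subset_insert f hPT⟩
  rw [incCount_insert hfP, incidence_eq hends]
  rcases hP.degree z with hz | hz <;> [left; right] <;> omega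

theorem IsEdgePath.inCut (hP : G.IsEdgePath P a b) (hT : G.IsSpanningTree T) (hPT : P ⊆ T)
    (hh : h ∈ P) (hg : G.ends g = s(a, b)) : G.InCut T h g := by
  refine inCut_of_ends hg fun hab => ?_
  obtain ⟨x, y, hxy⟩ := G.exists_ends_eq h
  have hsub : P.erase h ⊆ T.erase h := Finset.erase_subset_erase h hPT
  refine hT.inCut_self (hPT hh) x y hxy ?_
  rcases hP.split h hh x y hxy with ⟨hax, hyb⟩ | ⟨hay, hxb⟩
  · exact (hax.mono hsub).symm.trans (hab.trans (hyb.mono hsub).symm)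
  · exact (hxb.mono hsub).trans (hab.symm.trans (hay.mono hsub))

theorem IsEdgePath.mem_of_inCut (hP : G.IsEdgePath P a b) (hPT : P ⊆ T) (hcut : G.InCut T e g)
    (hg : G.ends g = s(a, b)) : e ∈ P := by
  by_contra he
  exact hcut a b hg (hP.connectsVia.mono fun h hh =>
    Finset.mem_erase.2 ⟨fun hhe => he (hhe ▸ hh), hPT hh⟩)

theorem IsEdgePath.exists_inCut_of_mem (hP : G.IsEdgePath P a b) (he : e ∈ P)
    (hee : G.InCut T e e) (hab : G.ConnectsVia (T.erase e) a b) :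
    ∃ h ∈ P.erase e, G.InCut T e h := by
  by_contra hno
  have htransfer : ∀ {x y}, G.ConnectsVia (P.erase e) x y → G.ConnectsVia (T.erase e) x y :=
    fun hxy => hxy.of_forall_ends fun h hh p q hpq =>
      not_not.1 fun hsep => hno ⟨h, hh, inCut_of_ends hpq hsep⟩
  obtain ⟨c, d, hcd⟩ := G.exists_ends_eq e
  refine hee c d hcd ?_
  rcases hP.split e he c d hcd with ⟨hac, hdb⟩ | ⟨had, hcb⟩
  · exact (htransfer hac).symm.trans (hab.trans (htransfer hdb).symm)
  · exact (htransfer hcb).trans (hab.symm.trans (htransfer had))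

theorem IsSpanningTree.exists_isCycleOf_of_inCut (hT : G.IsSpanningTree T) (hf : f ∉ T)
    (hcut : G.InCut T e f) : ∃ C, G.IsCycleOf T f C ∧ e ∈ C := by
  obtain ⟨u, v, hends⟩ := G.exists_ends_eq f
  obtain ⟨P, hPT, hP⟩ := exists_isEdgePath (hT.1 u v)
  exact ⟨insert f P, hP.isCycleOf hPT hf hends,
    Finset.mem_insert_of_mem (hP.mem_of_inCut hPT hcut hends)⟩

theorem IsSpanningTree.exists_inCut_inCut {T' : Finset G.E} (hT' : G.IsSpanningTree T')
    (hcut : G.InCut T e g) : ∃ h ∈ T', G.InCut T e h ∧ G.InCut T' h g := by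
  obtain ⟨u, v, hg⟩ := G.exists_ends_eq g
  obtain ⟨P, hPT', hP⟩ := exists_isEdgePath (hT'.1 u v)
  obtain ⟨h, hhP, hh⟩ := exists_inCut_of_connectsVia hP.connectsVia (hcut u v hg)
  exact ⟨h, hPT' hhP, hh, hP.inCut hT' hPT' hhP hg⟩

end Paths

section Intervals

variable {e : G.E}

theorem I_subset_Icc (e : G.E) : G.I e ⊆ Set.Icc (G.L e) (G.U e) := by
  rintro t (⟨hLU, rfl⟩ | ⟨h1, h2⟩)
  exacts [⟨le_rfl, G.LU e⟩, ⟨h1.le, h2.le⟩]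

theorem Icc_subset_closure_I (e : G.E) : Set.Icc (G.L e) (G.U e) ⊆ closure (G.I e) := by
  rcases (G.LU e).eq_or_lt with hLU | hLU
  · rw [← hLU, Set.Icc_self, Set.singleton_subset_iff]
    exact subset_closure (Or.inl ⟨hLU, rfl⟩)
  · have hI : G.I e = Set.Ioo (G.L e) (G.U e) := by
      ext t
      simp [I, hLU.ne]
    rw [hI, closure_Ioo hLU.ne]

theorem pw_mem_Icc (e : G.E) : G.pw e ∈ Set.Icc (G.L e) (G.U e) :=
  G.I_subset_Icc e (G.pw_mem e)

theorem trivialEdge_of_U_le_pw (h : G.U e ≤ G.pw e) : G.TrivialEdge e :=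
  (G.pw_mem e).elim (·.1) fun ⟨_, hlt⟩ => absurd h hlt.not_ge

theorem trivialEdge_of_pw_le_L (h : G.pw e ≤ G.L e) : G.TrivialEdge e :=
  (G.pw_mem e).elim (·.1) fun ⟨hlt, _⟩ => absurd h hlt.not_ge

end Intervals

/-! ### Limit trees -/

section LimitTrees

variable {T : Finset G.E} {e f x h : G.E}

/-- Two edges compare under `w^L` for all small `ε` as their lower keys compare. -/
def lowerKey (G : UncGraph) (e : G.E) : ℝ ×ₗ ℕ :=
  toLex (G.L e, if G.L e = G.U e then 0 else 1)

/-- Two edges compare under `w^U` for all small `ε` as their upper keys compare. -/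
def upperKey (G : UncGraph) (e : G.E) : ℝ ×ₗ ℕ :=
  toLex (G.U e, if G.L e = G.U e then 1 else 0)

theorem lowerWeight_eq (ε : ℝ) (e : G.E) :
    G.lowerWeight ε e = (ofLex (G.lowerKey e)).1 + ε * (ofLex (G.lowerKey e)).2 := by
  unfold lowerWeight lowerKey
  split_ifs <;> simp

theorem upperWeight_eq (ε : ℝ) (e : G.E) :
    G.upperWeight ε e = (ofLex (G.upperKey e)).1 + ε * (ofLex (G.upperKey e)).2 - ε := by
  unfold upperWeight upperKey
  split_ifs with h <;> simp [h]

theorem IsLowerLimitTree.isSpanningTree (hT : G.IsLowerLimitTree T) : G.IsSpanningTree T :=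
  let ⟨ε₀, hε₀, hmst⟩ := hT
  (hmst (ε₀ / 2) (by linarith) (by linarith)).1

theorem IsUpperLimitTree.isSpanningTree (hT : G.IsUpperLimitTree T) : G.IsSpanningTree T :=
  let ⟨ε₀, hε₀, hmst⟩ := hT
  (hmst (ε₀ / 2) (by linarith) (by linarith)).1

theorem IsMST.exchange_of_eq {wf : G.E → ℝ} (hM : G.IsMST wf T) (hx : x ∈ T) (hh : h ∉ T)
    (hcut : G.InCut T x h) (heq : wf x = wf h) : G.IsMST wf (insert h (T.erase x)) :=
  ⟨hM.1.exchange hx hcut, fun T' hT' => by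
    rw [sum_exchange wf hx hh, heq]
    linarith [hM.2 T' hT']⟩

theorem IsLowerLimitTree.lowerKey_le (hT : G.IsLowerLimitTree T) (hx : x ∈ T) (hh : h ∉ T)
    (hcut : G.InCut T x h) : G.lowerKey x ≤ G.lowerKey h := by
  obtain ⟨ε₀, hε₀, hmst⟩ := hT
  refine lex_le_of_forall_add_mul_le hε₀ fun ε h1 h2 => ?_
  simpa only [lowerWeight_eq] using (hmst ε h1 h2).le_of_inCut hx hh hcut

theorem IsUpperLimitTree.upperKey_le (hT : G.IsUpperLimitTree T) (hx : x ∈ T) (hh : h ∉ T)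
    (hcut : G.InCut T x h) : G.upperKey x ≤ G.upperKey h := by
  obtain ⟨ε₀, hε₀, hmst⟩ := hT
  refine lex_le_of_forall_add_mul_le hε₀ fun ε h1 h2 => ?_
  have := (hmst ε h1 h2).le_of_inCut hx hh hcut
  rw [upperWeight_eq, upperWeight_eq] at this
  linarith

theorem UniqueLimitTrees.lowerKey_lt (hT : G.UniqueLimitTrees T) (hx : x ∈ T) (hh : h ∉ T)
    (hcut : G.InCut T x h) : G.lowerKey x < G.lowerKey h := by
  refine (hT.1.lowerKey_le hx hh hcut).lt_of_ne fun heq => hh ?_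
  obtain ⟨ε₀, hε₀, hmst⟩ := hT.1
  have hswap : G.IsLowerLimitTree (insert h (T.erase x)) := ⟨ε₀, hε₀, fun ε h1 h2 =>
    (hmst ε h1 h2).exchange_of_eq hx hh hcut (by rw [lowerWeight_eq, lowerWeight_eq, heq])⟩
  exact hT.2.2.1 _ hswap ▸ Finset.mem_insert_self h _

theorem UniqueLimitTrees.upperKey_lt (hT : G.UniqueLimitTrees T) (hx : x ∈ T) (hh : h ∉ T)
    (hcut : G.InCut T x h) : G.upperKey x < G.upperKey h := by
  refine (hT.2.1.upperKey_le hx hh hcut).lt_of_ne fun heq => hh ?_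
  obtain ⟨ε₀, hε₀, hmst⟩ := hT.2.1
  have hswap : G.IsUpperLimitTree (insert h (T.erase x)) := ⟨ε₀, hε₀, fun ε h1 h2 =>
    (hmst ε h1 h2).exchange_of_eq hx hh hcut (by rw [upperWeight_eq, upperWeight_eq, heq])⟩
  exact hT.2.2.2 _ hswap ▸ Finset.mem_insert_self h _

theorem IsLowerLimitTree.L_le (hT : G.IsLowerLimitTree T) (hx : x ∈ T) (hh : h ∉ T)
    (hcut : G.InCut T x h) : G.L x ≤ G.L h :=
  (Prod.Lex.toLex_le_toLex'.1 (hT.lowerKey_le hx hh hcut)).1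

theorem IsUpperLimitTree.U_le (hT : G.IsUpperLimitTree T) (hx : x ∈ T) (hh : h ∉ T)
    (hcut : G.InCut T x h) : G.U x ≤ G.U h :=
  (Prod.Lex.toLex_le_toLex'.1 (hT.upperKey_le hx hh hcut)).1

theorem IsLowerLimitTree.L_lt_pw (hT : G.IsLowerLimitTree T) (hx : x ∈ T) (hh : h ∉ T)
    (hcut : G.InCut T x h) (hxt : ¬ G.TrivialEdge x) : G.L x < G.pw h := by
  obtain ⟨hle, heq⟩ := Prod.Lex.toLex_le_toLex'.1 (hT.lowerKey_le hx hh hcut)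
  rcases G.pw_mem h with ⟨hht, hpw⟩ | ⟨hlt, -⟩
  · refine hpw ▸ hle.lt_of_ne fun hLL => ?_
    have hxt' : G.L x ≠ G.U x := hxt
    simpa [hxt', hht] using heq hLL
  · exact hle.trans_lt hlt

theorem IsUpperLimitTree.pw_lt_U (hT : G.IsUpperLimitTree T) (hx : x ∈ T) (hh : h ∉ T)
    (hcut : G.InCut T x h) (hht : ¬ G.TrivialEdge h) : G.pw x < G.U h := by
  obtain ⟨hle, heq⟩ := Prod.Lex.toLex_le_toLex'.1 (hT.upperKey_le hx hh hcut)
  rcases G.pw_mem x with ⟨hxt, hpw⟩ | ⟨-, hlt⟩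
  · refine hpw ▸ hxt ▸ hle.lt_of_ne fun hUU => ?_
    have hht' : G.L h ≠ G.U h := hht
    simpa [hxt, hht'] using heq hUU
  · exact hlt.trans_le hle

theorem cutCondition_of_trivial (hlow : G.IsLowerLimitTree T) (hup : G.IsUpperLimitTree T)
    (he : e ∈ T) (hf : f ∉ T) (hcut : G.InCut T e f)
    (htriv : G.TrivialEdge e ∨ G.TrivialEdge f) :
    G.U e ≤ G.pw f ∧ G.pw e ≤ G.L f := by
  have hpe := G.pw_mem_Icc e
  have hpf := G.pw_mem_Icc f
  rcases htriv with htriv | htriv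
  · have := hlow.L_le he hf hcut
    have htriv' : G.L e = G.U e := htriv
    constructor <;> linarith [hpe.1, hpe.2, hpf.1]
  · have := hup.U_le he hf hcut
    have htriv' : G.L f = G.U f := htriv
    constructor <;> linarith [hpe.2, hpf.1, hpf.2]

end LimitTrees

/-! ### Prediction mandatory free instances -/

section PredMandatoryFree

variable {T T₀ : Finset G.E} {e f g x m : G.E}

def CutCondition (G : UncGraph) (T : Finset G.E) : Prop :=
  ∀ e ∈ T, ∀ f ∉ T, G.InCut T e f → G.U e ≤ G.pw f ∧ G.pw e ≤ G.L f

theorem IsSpanningTree.cycleCondition_iff_cutCondition (hT : G.IsSpanningTree T) :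
    (∀ f, f ∉ T → ∀ C, G.IsCycleOf T f C → ∀ e ∈ C, e ≠ f →
      G.U e ≤ G.pw f ∧ G.pw e ≤ G.L f) ↔ G.CutCondition T := by
  refine ⟨fun h e he f hf hcut => ?_, fun h f hf C hC e he hef =>
    h e (hC.mem_of_ne he hef) f hf (hC.inCut hT he hef)⟩
  obtain ⟨C, hC, heC⟩ := hT.exists_isCycleOf_of_inCut hf hcut
  exact h f hf C hC e heC fun hef => hf (hef ▸ he)

theorem IsSpanningTree.isMST_of_forall_inCut (hT : G.IsSpanningTree T) {wf : G.E → ℝ}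
    (hwf : ∀ e ∈ T, ∀ f ∉ T, G.InCut T e f → wf e ≤ wf f) : G.IsMST wf T := by
  refine ⟨hT, fun T' hT' => ?_⟩
  induction hn : (T' \ T).card generalizing T' with
  | zero => rw [hT.eq_of_subset hT' (Finset.sdiff_eq_empty_iff_subset.1 (Finset.card_eq_zero.1 hn))]
  | succ n ih =>
    obtain ⟨f, hf⟩ := Finset.card_pos.1 (show 0 < (T' \ T).card by omega)
    obtain ⟨hfT', hfT⟩ := Finset.mem_sdiff.1 hf
    obtain ⟨h, hhT, hcut', hcut⟩ := hT.exists_inCut_inCut (hT'.inCut_self hfT')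
    have hhT' : h ∉ T' := hcut'.not_mem fun hhf => hfT (hhf ▸ hhT)
    have hcard : (insert h (T'.erase f) \ T).card = n := by
      rw [Finset.insert_sdiff_of_mem _ hhT, Finset.erase_sdiff_comm, Finset.card_erase_of_mem hf,
        hn, Nat.add_sub_cancel]
    have := ih _ (hT'.exchange hfT' hcut') hcard
    rw [sum_exchange wf hfT' hhT'] at this
    linarith [hwf h hhT f hfT hcut]

theorem IsSpanningTree.predMandatoryFree_of_cutCondition (hT : G.IsSpanningTree T)
    (hcond : G.CutCondition T) : G.PredMandatoryFree := by
  intro m hm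
  refine Finset.notMem_erase m Finset.univ (hm _ ⟨T, fun wf hwf => hT.isMST_of_forall_inCut ?_⟩)
  intro e he f hf hcut
  have hpw : ∀ g ≠ m, wf g = G.pw g := fun g hg =>
    hwf.1 g (Finset.mem_erase.2 ⟨hg, Finset.mem_univ g⟩)
  obtain ⟨hUe, hLf⟩ := hcond e he f hf hcut
  by_cases hfm : f = m
  · subst hfm
    rw [hpw e fun hef => hf (hef ▸ he)]
    exact hLf.trans (G.I_subset_Icc f (hwf.2 f)).1
  · rw [hpw f hfm]
    exact (G.I_subset_Icc e (hwf.2 e)).2.trans hUe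

theorem isClosed_setOf_isMST {wf : ℝ → G.E → ℝ} (hwf : ∀ e, Continuous fun t => wf t e)
    (T₀ : Finset G.E) : IsClosed {t | G.IsMST (wf t) T₀} := by
  simp only [IsMST, Set.ofPred_and, Set.ofPred_forall]
  exact isClosed_const.inter (isClosed_iInter fun T' => isClosed_iInter fun _ =>
    isClosed_le (continuous_finsetSum _ fun e _ => hwf e)
      (continuous_finsetSum _ fun e _ => hwf e))

/-- The values of `m` for which `T₀` is an MST form a closed set containing `I m`. -/
theorem Feasible.exists_isMST_update (hQ : G.Feasible G.pw (Finset.univ.erase m)) :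
    ∃ T₀, ∀ t ∈ Set.Icc (G.L m) (G.U m), G.IsMST (Function.update G.pw m t) T₀ := by
  obtain ⟨T₀, hver⟩ := hQ
  refine ⟨T₀, (G.Icc_subset_closure_I m).trans
    (closure_minimal (fun t ht => hver _ ⟨?_, ?_⟩)
      (isClosed_setOf_isMST (fun e => ?_) T₀))⟩
  · exact fun e he => Function.update_of_ne (Finset.mem_erase.1 he).1 _ _
  · intro e
    by_cases hem : e = m
    · subst hem
      rw [Function.update_self]
      exact ht
    · rw [Function.update_of_ne hem]
      exact G.pw_mem e
  · by_cases hem : e = m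
    · subst hem
      simp only [Function.update_self]
      exact continuous_id
    · simp only [Function.update_of_ne hem]
      exact continuous_const

theorem PredMandatoryFree.exists_isMST_update (hPMF : G.PredMandatoryFree) (m : G.E) :
    ∃ T₀, ∀ t ∈ Set.Icc (G.L m) (G.U m), G.IsMST (Function.update G.pw m t) T₀ := by
  obtain ⟨Q, hQ, hmQ⟩ := not_forall₂.1 (hPMF m)
  refine Feasible.exists_isMST_update ?_
  obtain ⟨T₀, hver⟩ := hQ
  exact ⟨T₀, fun wf hwf => hver wf ⟨fun e he => hwf.1 e
    (Finset.mem_erase.2 ⟨fun hem => hmQ (hem ▸ he), Finset.mem_univ e⟩), hwf.2⟩⟩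

theorem IsLowerLimitTree.mem_of_isMST_update (hT : G.IsLowerLimitTree T) (hx : x ∈ T)
    (hxt : ¬ G.TrivialEdge x) (hM : G.IsMST (Function.update G.pw x (G.L x)) T₀) :
    x ∈ T₀ := by
  by_contra hxT₀
  obtain ⟨h, hhT₀, hcut, hcut₀⟩ := hM.1.exists_inCut_inCut (hT.isSpanningTree.inCut_self hx)
  have hhx : h ≠ x := fun hhx => hxT₀ (hhx ▸ hhT₀)
  have hlt := hT.L_lt_pw hx (hcut.not_mem hhx) hcut hxt
  have hle := hM.le_of_inCut hhT₀ hxT₀ hcut₀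
  rw [Function.update_self, Function.update_of_ne hhx] at hle
  exact hle.not_gt hlt

theorem IsUpperLimitTree.not_mem_of_isMST_update (hT : G.IsUpperLimitTree T) (hg : g ∉ T)
    (hgt : ¬ G.TrivialEdge g) (hM : G.IsMST (Function.update G.pw g (G.U g)) T₀) :
    g ∉ T₀ := by
  intro hgT₀
  obtain ⟨h, hhT, hcut₀, hcut⟩ :=
    hT.isSpanningTree.exists_inCut_inCut (hM.1.inCut_self hgT₀)
  have hhg : h ≠ g := fun hhg => hg (hhg ▸ hhT)
  have hlt := hT.pw_lt_U hhT hg hcut hgt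
  have hle := hM.le_of_inCut hgT₀ (hcut₀.not_mem hhg) hcut₀
  rw [Function.update_self, Function.update_of_ne hhg] at hle
  exact hle.not_gt hlt

/-- Take a violating `x` with maximal `U x`. Since `x` is not mandatory, some tree `T₀` is an MST
both for `x` at `L x` and at `U x`; the lower limit tree forces `x ∈ T₀`, and the edge that
replaces `x` in `T₀` along the cycle of `f` is either `f` or a violating edge with larger `U`. -/
theorem PredMandatoryFree.U_le_pw (hPMF : G.PredMandatoryFree) (hlow : G.IsLowerLimitTree T)
    (hup : G.IsUpperLimitTree T) (he : e ∈ T) (hf : f ∉ T) (hcut : G.InCut T e f) :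
    G.U e ≤ G.pw f := by
  by_contra hlt
  have hT := hlow.isSpanningTree
  obtain ⟨x, hxV, hmax⟩ :=
    Finset.exists_max_image (T.filter fun x => G.InCut T x f ∧ G.pw f < G.U x) G.U
      ⟨e, Finset.mem_filter.2 ⟨he, hcut, not_le.1 hlt⟩⟩
  obtain ⟨hx, hxcut, hxlt⟩ := Finset.mem_filter.1 hxV
  have hxt : ¬ G.TrivialEdge x := fun htriv =>
    (cutCondition_of_trivial hlow hup hx hf hxcut (.inl htriv)).1.not_gt hxlt
  obtain ⟨T₀, hT₀⟩ := hPMF.exists_isMST_update x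
  have hMU := hT₀ _ (Set.right_mem_Icc.2 (G.LU x))
  have hxT₀ := hlow.mem_of_isMST_update hx hxt (hT₀ _ (Set.left_mem_Icc.2 (G.LU x)))
  obtain ⟨u, v, hends⟩ := G.exists_ends_eq f
  obtain ⟨P, hPT, hP⟩ := exists_isEdgePath (hT.1 u v)
  have hxP := hP.mem_of_inCut hPT hxcut hends
  obtain ⟨a, b, hab⟩ := G.exists_ends_eq x
  obtain ⟨h, hhC, hcut₀⟩ := exists_inCut_of_connectsVia
    ((hP.isCycleOf hPT hf hends).1.connectsVia_erase (Finset.mem_insert_of_mem hxP) hab)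
    (hMU.1.inCut_self hxT₀ a b hab)
  obtain ⟨hhx, hhC⟩ := Finset.mem_erase.1 hhC
  have hle := hMU.le_of_inCut hxT₀ (hcut₀.not_mem hhx) hcut₀
  rw [Function.update_self, Function.update_of_ne hhx] at hle
  rcases Finset.mem_insert.1 hhC with rfl | hhP
  · exact hxlt.not_ge hle
  have hhcut := hP.inCut hT hPT hhP hends
  by_cases hhlt : G.pw f < G.U h
  · have := hmax h (Finset.mem_filter.2 ⟨hPT hhP, hhcut, hhlt⟩)
    have htriv := trivialEdge_of_U_le_pw (by linarith)
    exact (cutCondition_of_trivial hlow hup (hPT hhP) hf hhcut (.inl htriv)).1.not_gt hhlt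
  · linarith [(G.pw_mem_Icc h).2]

/-- Dual to `PredMandatoryFree.U_le_pw`: take a violating `g` with minimal `L g`. -/
theorem PredMandatoryFree.pw_le_L (hPMF : G.PredMandatoryFree) (hlow : G.IsLowerLimitTree T)
    (hup : G.IsUpperLimitTree T) (he : e ∈ T) (hf : f ∉ T) (hcut : G.InCut T e f) :
    G.pw e ≤ G.L f := by
  by_contra hlt
  obtain ⟨g, hgV, hmin⟩ := Finset.exists_min_image
    (Finset.univ.filter fun g => g ∉ T ∧ G.InCut T e g ∧ G.L g < G.pw e)
    G.L ⟨f, Finset.mem_filter.2 ⟨Finset.mem_univ f, hf, hcut, not_le.1 hlt⟩⟩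
  obtain ⟨-, hg, hgcut, hglt⟩ := Finset.mem_filter.1 hgV
  have hgt : ¬ G.TrivialEdge g := fun htriv =>
    (cutCondition_of_trivial hlow hup he hg hgcut (.inr htriv)).2.not_gt hglt
  obtain ⟨T₀, hT₀⟩ := hPMF.exists_isMST_update g
  have hML := hT₀ _ (Set.left_mem_Icc.2 (G.LU g))
  have hgT₀ := hup.not_mem_of_isMST_update hg hgt (hT₀ _ (Set.right_mem_Icc.2 (G.LU g)))
  obtain ⟨h, hhT₀, hcut', hcut₀⟩ := hML.1.exists_inCut_inCut hgcut
  have hhg : h ≠ g := fun hhg => hgT₀ (hhg ▸ hhT₀)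
  have hle := hML.le_of_inCut hhT₀ hgT₀ hcut₀
  rw [Function.update_self, Function.update_of_ne hhg] at hle
  by_cases hhe : h = e
  · subst hhe
    exact hglt.not_ge hle
  have hhT := hcut'.not_mem hhe
  by_cases hhlt : G.L h < G.pw e
  · have := hmin h (Finset.mem_filter.2 ⟨Finset.mem_univ h, hhT, hcut', hhlt⟩)
    have htriv := trivialEdge_of_pw_le_L (by linarith)
    exact (cutCondition_of_trivial hlow hup he hhT hcut' (.inr htriv)).2.not_gt hhlt
  · linarith [(G.pw_mem_Icc h).1]

theorem UniqueLimitTrees.predMandatoryFree_iff (hT : G.UniqueLimitTrees T) :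
    G.PredMandatoryFree ↔ G.CutCondition T :=
  ⟨fun hPMF _ he _ hf hcut => ⟨hPMF.U_le_pw hT.1 hT.2.1 he hf hcut,
    hPMF.pw_le_L hT.1 hT.2.1 he hf hcut⟩,
    hT.1.isSpanningTree.predMandatoryFree_of_cutCondition⟩

end PredMandatoryFree

/-! ### Queried instances -/

section Restrict

variable {w : G.E → ℝ} {Q T T' : Finset G.E} {e : G.E}

@[simp] theorem restrict_L (e : G.E) :
    (G.restrict w Q).L e = if e ∈ Q then w e else G.L e := rfl

@[simp] theorem restrict_U (e : G.E) :
    (G.restrict w Q).U e = if e ∈ Q then w e else G.U e := rfl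

@[simp] theorem restrict_pw (e : G.E) :
    (G.restrict w Q).pw e = if e ∈ Q then w e else G.pw e := rfl

theorem not_mem_of_not_trivialEdge_restrict (he : ¬ (G.restrict w Q).TrivialEdge e) : e ∉ Q :=
  fun heQ => he (by simp [TrivialEdge, heQ])

theorem lowerKey_restrict_of_not_mem (he : e ∉ Q) :
    (G.restrict w Q).lowerKey e = G.lowerKey e := by
  simp [lowerKey, he]

theorem upperKey_restrict_of_not_mem (he : e ∉ Q) :
    (G.restrict w Q).upperKey e = G.upperKey e := by
  simp [upperKey, he]

theorem lowerKey_le_restrict (hw : w e ∈ G.I e) :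
    G.lowerKey e ≤ (G.restrict w Q).lowerKey e := by
  by_cases he : e ∈ Q
  · simp only [lowerKey, restrict_L, restrict_U, if_pos he, Prod.Lex.toLex_le_toLex']
    rcases hw with ⟨hLU, hwL⟩ | ⟨hlt, -⟩
    · simp [hLU, hwL]
    · exact ⟨hlt.le, fun h => absurd h hlt.ne⟩
  · rw [lowerKey_restrict_of_not_mem he]

theorem upperKey_restrict_le (hw : w e ∈ G.I e) :
    (G.restrict w Q).upperKey e ≤ G.upperKey e := by
  by_cases he : e ∈ Q
  · simp only [upperKey, restrict_L, restrict_U, if_pos he, Prod.Lex.toLex_le_toLex']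
    rcases hw with ⟨hLU, hwL⟩ | ⟨-, hlt⟩
    · simp [hLU, hwL]
    · exact ⟨hlt.le, fun h => absurd h hlt.ne⟩
  · rw [upperKey_restrict_of_not_mem he]

/-- Querying can only raise lower keys. -/
theorem UniqueLimitTrees.sdiff_restrict_subset (hT : G.UniqueLimitTrees T) (hw : G.Valid w)
    (hT' : (G.restrict w Q).UniqueLimitTrees T') : T \ T' ⊆ Q := by
  intro x hx
  obtain ⟨hxT, hxT'⟩ := Finset.mem_sdiff.1 hx
  by_contra hxQ
  obtain ⟨h, hhT', hcut, hcut'⟩ :=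
    (hT'.1.isSpanningTree : G.IsSpanningTree T').exists_inCut_inCut
      (hT.1.isSpanningTree.inCut_self hxT)
  have hhx : h ≠ x := fun hhx => hxT' (hhx ▸ hhT')
  have hlt := hT.lowerKey_lt hxT (hcut.not_mem hhx) hcut
  have hlt' := hT'.lowerKey_lt hhT' hxT' hcut'
  exact (((hlt.trans_le (lowerKey_le_restrict (hw h))).trans hlt').trans_eq
    (lowerKey_restrict_of_not_mem hxQ)).false

/-- Querying can only lower upper keys. -/
theorem UniqueLimitTrees.restrict_sdiff_subset (hT : G.UniqueLimitTrees T) (hw : G.Valid w)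
    (hT' : (G.restrict w Q).UniqueLimitTrees T') : T' \ T ⊆ Q := by
  intro y hy
  obtain ⟨hyT', hyT⟩ := Finset.mem_sdiff.1 hy
  by_contra hyQ
  obtain ⟨h, hhT, hcut', hcut⟩ := hT.1.isSpanningTree.exists_inCut_inCut
    ((hT'.1.isSpanningTree : G.IsSpanningTree T').inCut_self hyT')
  have hhy : h ≠ y := fun hhy => hyT (hhy ▸ hhT)
  have hlt := hT.upperKey_lt hhT hyT hcut
  have hlt' := hT'.upperKey_lt hyT' (hcut'.not_mem hhy) hcut'
  exact (((hlt'.trans_le (upperKey_restrict_le (hw h))).trans hlt).trans_eq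
    (upperKey_restrict_of_not_mem hyQ).symm).false

theorem UniqueLimitTrees.cutCondition_restrict (hT : G.UniqueLimitTrees T) (hw : G.Valid w)
    (hcond : G.CutCondition T) (hT' : (G.restrict w Q).UniqueLimitTrees T') :
    (G.restrict w Q).CutCondition T' := by
  intro (e : G.E) he (f : G.E) hf hcut
  by_cases htriv : (G.restrict w Q).TrivialEdge e ∨ (G.restrict w Q).TrivialEdge f
  · exact cutCondition_of_trivial hT'.1 hT'.2.1 he hf hcut htriv
  obtain ⟨heQ, hfQ⟩ := not_or.1 htriv |>.imp not_mem_of_not_trivialEdge_restrict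
    not_mem_of_not_trivialEdge_restrict
  have hTs := hT.1.isSpanningTree
  have hT's : G.IsSpanningTree T' := hT'.1.isSpanningTree
  have heT : e ∈ T := not_not.1 fun heT => heQ (hT.restrict_sdiff_subset hw hT'
    (Finset.mem_sdiff.2 ⟨he, heT⟩))
  have hfT : f ∉ T := fun hfT => hfQ (hT.sdiff_restrict_subset hw hT'
    (Finset.mem_sdiff.2 ⟨hfT, hf⟩))
  simp only [restrict_U, restrict_pw, restrict_L, if_neg heQ, if_neg hfQ]
  constructor
  · obtain ⟨x, hxT, hcut', hcutx⟩ := hTs.exists_inCut_inCut hcut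
    by_cases hxe : x = e
    · exact hxe ▸ (hcond x hxT f hfT hcutx).1
    have hxQ : x ∈ Q := hT.sdiff_restrict_subset hw hT'
      (Finset.mem_sdiff.2 ⟨hxT, hcut'.not_mem hxe⟩)
    have hUx := hT'.2.1.U_le he (hcut'.not_mem hxe) hcut'
    simp only [restrict_U, if_neg heQ, if_pos hxQ] at hUx
    linarith [(G.I_subset_Icc x (hw x)).2, (hcond x hxT f hfT hcutx).1]
  · by_cases hcutT : G.InCut T e f
    · exact (hcond e heT f hfT hcutT).2
    obtain ⟨u, v, hends⟩ := G.exists_ends_eq f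
    obtain ⟨P, hPT', hP⟩ := exists_isEdgePath (hT's.1 u v)
    obtain ⟨y, hyP, hycut⟩ := hP.exists_inCut_of_mem (hP.mem_of_inCut hPT' hcut hends)
      (hTs.inCut_self heT) (not_not.1 fun h => hcutT (inCut_of_ends hends h))
    obtain ⟨hye, hyP⟩ := Finset.mem_erase.1 hyP
    have hyQ : y ∈ Q := hT.restrict_sdiff_subset hw hT'
      (Finset.mem_sdiff.2 ⟨hPT' hyP, hycut.not_mem hye⟩)
    have hLy := hT'.1.L_le (hPT' hyP) hf (hP.inCut hT's hPT' hyP hends)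
    simp only [restrict_L, if_pos hyQ, if_neg hfQ] at hLy
    linarith [(G.I_subset_Icc y (hw y)).1, (hcond e heT y (hycut.not_mem hye) hycut).2]

end Restrict

end UncGraph

/-- characterization of prediction mandatory free instances:
an instance with unique `T_L = T_U` is prediction mandatory free iff for every
cycle `C` closed by an edge `f ∉ T_L` and every `e ∈ C ∖ {f}` we have
`ŵ_f ≥ U_e` and `ŵ_e ≤ L_f`; moreover a prediction mandatory free instance
remains prediction mandatory free after further queries, as long as the unique
limit trees `T_L = T_U` are maintained. -/
theorem pmf_characterization
    (G : UncGraph) (w : G.E → ℝ) (hw : G.Valid w)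
    (T : Finset G.E) (hT : G.UniqueLimitTrees T) :
    (G.PredMandatoryFree ↔
      ∀ f, f ∉ T → ∀ C, G.IsCycleOf T f C → ∀ e ∈ C, e ≠ f →
        G.U e ≤ G.pw f ∧ G.pw e ≤ G.L f) ∧
    (G.PredMandatoryFree →
      ∀ (Q : Finset G.E) (T' : Finset G.E),
        (G.restrict w Q).UniqueLimitTrees T' →
        (G.restrict w Q).PredMandatoryFree) :=
  ⟨hT.predMandatoryFree_iff.trans hT.1.isSpanningTree.cycleCondition_iff_cutCondition.symm,
    fun hPMF _ _ hT' => hT'.predMandatoryFree_iff.2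
      (hT.cutCondition_restrict hw (hT.predMandatoryFree_iff.1 hPMF) hT')⟩
end
end

section
/- Even restricted to instances of the MST problem under explorable uncertainty with predictions in which exactly one prediction is wrong (k_# = 1, i.e., |{e ∈ E : w_e ≠ ŵ_e}| = 1), every deterministic algorithm has competitive ratio ρ ≥ 2: for every deterministic algorithm there exists such an instance on which it makes at least 2·|OPT| queries. -/
/-!
Common framework: the minimum spanning tree problem under explorable
uncertainty with (untrusted) predictions.
-/

open scoped BigOperators
open scoped Classical

noncomputable section

/-!
Take two parallel edges with intervals `(0, 2)` and `(1, 3)` and predictions `1` and `2`.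
No MST is verified before any query, so the first query `e₀` of a deterministic algorithm
is the same for all realizations. The adversary reveals `3/2` at `e₀`, which lies in both
intervals, so this query settles nothing, and keeps the other prediction correct: that value
(`2` resp. `1`) is an endpoint of `e₀`'s interval, so querying the other edge alone suffices.
Hence `|OPT| = 1` while the algorithm queries both edges.
-/

theorem Set.ncard_setOf_update_ne {α β : Type*} [DecidableEq α] {f : α → β} {a : α} {x : β}
    (hx : x ≠ f a) : {b | Function.update f a x b ≠ f b}.ncard = 1 := by
  have : {b | Function.update f a x b ≠ f b} = {a} := by
    ext b
    by_cases hb : b = a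
    · subst hb; simpa using hx
    · simp [hb]
  rw [this, Set.ncard_singleton]

namespace UncGraph

variable {G : UncGraph}

theorem valid_pw : G.Valid G.pw := G.pw_mem

theorem optCost_le_card {w : G.E → ℝ} {Q : Finset G.E} (hQ : G.Feasible w Q) :
    G.optCost w ≤ Q.card :=
  Nat.sInf_le ⟨Q, hQ, rfl⟩

end UncGraph

namespace Algorithm

variable (A : Algorithm) {G : UncGraph} {w : G.E → ℝ}

theorem runQueries_eq_empty_or_exists_first_mem (n : ℕ) :
    A.runQueries G w n = ∅ ∨ ∃ e, A.next G ∅ w = some e ∧ e ∈ A.runQueries G w n := by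
  induction n with
  | zero => exact Or.inl rfl
  | succ n ih =>
    rw [runQueries]
    split_ifs
    · exact ih
    rcases ih with hempty | ⟨e, hfirst, he⟩
    · rw [hempty]
      cases hnext : A.next G ∅ w with
      | none => exact Or.inl rfl
      | some e => exact Or.inr ⟨e, rfl, Finset.mem_insert_self e ∅⟩
    · refine Or.inr ⟨e, hfirst, ?_⟩
      split
      · exact Finset.mem_insert_of_mem he
      · exact he

theorem exists_first_mem_finalQueries (hfin : G.Feasible w (A.finalQueries G w))
    (hempty : ¬ G.Feasible w ∅) :
    ∃ e, A.next G ∅ w = some e ∧ e ∈ A.finalQueries G w := by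
  refine (A.runQueries_eq_empty_or_exists_first_mem _).resolve_left fun h => hempty ?_
  rwa [finalQueries, h] at hfin

theorem two_mul_optCost_le_algCost {e f : G.E} (hfin : G.Feasible w (A.finalQueries G w))
    (hempty : ¬ G.Feasible w ∅) (hfirst : A.next G ∅ w = some e)
    (he : ¬ G.Feasible w {e}) (hf : G.Feasible w {f}) :
    2 * G.optCost w ≤ A.algCost G w := by
  obtain ⟨e', hfirst', he'⟩ := A.exists_first_mem_finalQueries hfin hempty
  obtain rfl : e' = e := Option.some_injective _ (hfirst'.symm.trans hfirst)
  have hcard : 2 ≤ A.algCost G w := by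
    by_contra! hlt
    have : A.finalQueries G w = {e'} := Finset.eq_singleton_iff_unique_mem.2
      ⟨he', fun b hb => Finset.card_le_one.1 (Nat.le_of_lt_succ hlt) b hb e' he'⟩
    exact he (this ▸ hfin)
  have hopt : G.optCost w ≤ 1 := UncGraph.optCost_le_card hf
  omega

end Algorithm

@[reducible] def twoEdges : UncGraph where
  V := Bool
  E := Bool
  fintV := inferInstance
  fintE := inferInstance
  decV := inferInstance
  decE := inferInstance
  ends := fun _ => s(false, true)
  conn := by
    intro u v
    cases u <;> cases v
    exacts [.refl, .single ⟨false, rfl⟩, .single ⟨false, Sym2.eq_swap⟩, .refl]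
  L := fun e => if e then 1 else 0
  U := fun e => if e then 3 else 2
  LU := by intro e; cases e <;> norm_num
  pw := fun e => if e then 2 else 1
  pw_mem := by intro e; cases e <;> norm_num

namespace twoEdges

theorem valid_iff {w : Bool → ℝ} :
    twoEdges.Valid w ↔ (0 < w false ∧ w false < 2) ∧ (1 < w true ∧ w true < 3) := by
  simp [UncGraph.Valid, UncGraph.I, Bool.forall_bool]

theorem isSpanningTree_iff {S : Finset Bool} : twoEdges.IsSpanningTree S ↔ ∃ e, S = {e} := by
  rw [← Finset.card_eq_one]
  refine ⟨fun h => by simpa using h.2, fun h => ⟨?_, by simp [h]⟩⟩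
  obtain ⟨e, rfl⟩ := Finset.card_eq_one.1 h
  intro u v
  cases u <;> cases v
  exacts [.refl, .single ⟨e, Finset.mem_singleton_self e, rfl⟩,
    .single ⟨e, Finset.mem_singleton_self e, Sym2.eq_swap⟩, .refl]

theorem isMST_iff {wf : Bool → ℝ} {T : Finset Bool} :
    twoEdges.IsMST wf T ↔ ∃ e, T = {e} ∧ ∀ e', wf e ≤ wf e' := by
  simp only [UncGraph.IsMST, isSpanningTree_iff]
  constructor
  · rintro ⟨⟨e, rfl⟩, hmin⟩
    exact ⟨e, rfl, fun e' => by simpa using hmin {e'} ⟨e', rfl⟩⟩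
  · rintro ⟨e, rfl, hmin⟩
    exact ⟨⟨e, rfl⟩, by rintro _ ⟨e', rfl⟩; simpa using hmin e'⟩

theorem not_feasible_of_compatible {w : Bool → ℝ} {Q : Finset Bool} (wf₁ wf₂ : Bool → ℝ)
    (h₁ : twoEdges.Compatible w Q wf₁) (h₂ : twoEdges.Compatible w Q wf₂)
    (hlt₁ : wf₁ false < wf₁ true) (hlt₂ : wf₂ true < wf₂ false) :
    ¬ twoEdges.Feasible w Q := by
  rintro ⟨T, hT⟩
  obtain ⟨a, rfl, ha⟩ := isMST_iff.1 (hT _ h₁)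
  obtain ⟨b, hab, hb⟩ := isMST_iff.1 (hT _ h₂)
  obtain rfl : a = b := Finset.singleton_inj.1 hab
  cases a
  · linarith [hb true]
  · linarith [ha false]

theorem not_feasible_empty (w : Bool → ℝ) : ¬ twoEdges.Feasible w ∅ :=
  not_feasible_of_compatible twoEdges.pw (fun e => if e then 6 / 5 else 3 / 2)
    ⟨by simp, UncGraph.valid_pw⟩ ⟨by simp, valid_iff.2 (by norm_num)⟩ (by norm_num) (by norm_num)

def adversary (e₀ : Bool) : Bool → ℝ := Function.update twoEdges.pw e₀ (3 / 2)

theorem valid_adversary (e₀ : Bool) : twoEdges.Valid (adversary e₀) := by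
  cases e₀ <;> norm_num [valid_iff, adversary]

theorem ncard_adversary_ne_pw (e₀ : Bool) : {e | adversary e₀ e ≠ twoEdges.pw e}.ncard = 1 :=
  Set.ncard_setOf_update_ne (by cases e₀ <;> norm_num)

theorem not_feasible_adversary_singleton (e₀ : Bool) :
    ¬ twoEdges.Feasible (adversary e₀) {e₀} := by
  cases e₀
  · exact not_feasible_of_compatible (adversary false) (fun e => if e then 6 / 5 else 3 / 2)
      ⟨by simp, valid_adversary false⟩ ⟨by simp [adversary], valid_iff.2 (by norm_num)⟩
      (by norm_num [adversary]) (by norm_num)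
  · exact not_feasible_of_compatible (adversary true) (fun e => if e then 3 / 2 else 19 / 10)
      ⟨by simp, valid_adversary true⟩ ⟨by simp [adversary], valid_iff.2 (by norm_num)⟩
      (by norm_num [adversary]) (by norm_num)

theorem feasible_adversary_singleton_not (e₀ : Bool) :
    twoEdges.Feasible (adversary e₀) {!e₀} := by
  refine ⟨{false}, fun wf ⟨hQ, hvalid⟩ => isMST_iff.2 ⟨false, rfl, ?_⟩⟩
  have hrevealed := hQ (!e₀) (Finset.mem_singleton_self _)
  rw [← UncGraph.Valid, valid_iff] at hvalid
  rw [Bool.forall_bool]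
  cases e₀ <;> norm_num [adversary] at hrevealed <;> constructor <;> linarith

end twoEdges

/-- even restricted to instances with exactly one inaccurate
prediction (`k_# = 1`), every deterministic algorithm has competitive ratio at
least `2`: there is such an instance on which it makes at least `2·|OPT|`
queries. -/
theorem lower_bound_single_wrong_prediction :
    ∀ A : Algorithm, A.Solves →
      ∃ (G : UncGraph) (w : G.E → ℝ), G.Valid w ∧
        {e : G.E | w e ≠ G.pw e}.ncard = 1 ∧
        2 * (G.optCost w : ℝ) ≤ (A.algCost G w : ℝ) := by
  intro A hA
  obtain ⟨e₀, hfirst, -⟩ := A.exists_first_mem_finalQueries (hA twoEdges _ UncGraph.valid_pw)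
    (twoEdges.not_feasible_empty _)
  let w := twoEdges.adversary e₀
  have hvalid : twoEdges.Valid w := twoEdges.valid_adversary e₀
  have hfirst' : A.next twoEdges ∅ w = some e₀ := (A.lawful _ _ _ _ (by simp)).trans hfirst
  refine ⟨twoEdges, w, hvalid, twoEdges.ncard_adversary_ne_pw e₀, ?_⟩
  exact_mod_cast A.two_mul_optCost_le_algCost (hA _ _ hvalid) (twoEdges.not_feasible_empty w)
    hfirst' (twoEdges.not_feasible_adversary_singleton e₀)
    (twoEdges.feasible_adversary_singleton_not e₀)
end
end
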